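/- arXiv:hep-th/0301088 — 2 statements merged into one kernel-verified Lean document; each statement's English description precedes it below -/
import Mathlib

section
/- The two-particle contribution to the constant C of the scaling Ising model is given by: integral over theta in (-infinity, infinity) of (tanh^2(theta/2) - 1) * ( ln(cosh(theta/2)) + gamma ) d theta = 4*(ln(2) - gamma - 1), where gamma is the Euler-Mascheroni constant. -/
/-!
With `θ = 2u` the integrand becomes `-2 (1 - tanh² u)(log cosh u + γ)`. Now `1 - tanh² = tanh'`,
and, since `(log cosh)' = tanh`, `(1 - tanh² u) log cosh u` is the derivative of
`tanh u (log cosh u + 1) - u`. Both integrals are therefore differences of limits at `±∞`: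
`tanh → ±1`, and `tanh u (log cosh u + 1) - u → ±(1 - log 2)` because
`log cosh u = |u| - log 2 + o(1)`. The integrands are nonnegative, so the existence of these
limits also gives integrability.
-/

open Real Filter Topology MeasureTheory Set

theorem MeasureTheory.integrable_of_hasDerivAt_of_nonneg {g g' : ℝ → ℝ} {m n : ℝ}
    (hderiv : ∀ x, HasDerivAt g (g' x) x) (hg' : ∀ x, 0 ≤ g' x)
    (hbot : Tendsto g atBot (𝓝 m)) (htop : Tendsto g atTop (𝓝 n)) : Integrable g' := by
  have hIoi : IntegrableOn g' (Ioi 0) :=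
    integrableOn_Ioi_deriv_of_nonneg' (fun x _ ↦ hderiv x) (fun x _ ↦ hg' x) htop
  have hIio : IntegrableOn g' (Iio 0) := by
    have hreflected : IntegrableOn (g' ∘ Neg.neg) (Neg.neg ⁻¹' Iio 0) := by
      rw [neg_preimage, neg_Iio, neg_zero]
      refine integrableOn_Ioi_deriv_of_nonneg' (g := fun x ↦ -g (-x))
        (fun x _ ↦ ?_) (fun x _ ↦ hg' (-x)) (hbot.comp tendsto_neg_atTop_atBot).neg
      have h := ((hderiv (-x)).comp x (hasDerivAt_neg x)).neg
      rwa [mul_neg_one, neg_neg] at h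
    exact ((Measure.measurePreserving_neg volume).integrableOn_comp_preimage
      (Homeomorph.neg ℝ).measurableEmbedding).1 hreflected
  rw [← integrableOn_univ, ← Iio_union_Ici (a := (0 : ℝ))]
  exact hIio.union ((integrableOn_Ici_iff_integrableOn_Ioi).2 hIoi)

namespace Real

theorem hasDerivAt_tanh (x : ℝ) : HasDerivAt tanh (1 - tanh x ^ 2) x := by
  have hcosh := (cosh_pos x).ne'
  have h := (hasDerivAt_sinh x).div (hasDerivAt_cosh x) hcosh
  rw [show sinh / cosh = tanh from funext fun y ↦ (tanh_eq_sinh_div_cosh y).symm] at h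
  refine h.congr_deriv ?_
  rw [tanh_eq_sinh_div_cosh]
  field_simp

theorem hasDerivAt_log_cosh (x : ℝ) : HasDerivAt (fun y ↦ log (cosh y)) (tanh x) x := by
  simpa [tanh_eq_sinh_div_cosh] using (hasDerivAt_cosh x).log (cosh_pos x).ne'

theorem tanh_eq_one_sub_exp_div (x : ℝ) :
    tanh x = (1 - exp (-2 * x)) / (1 + exp (-2 * x)) := by
  rw [tanh_eq]
  have : exp (-x) = exp (-2 * x) * exp x := by rw [← exp_add]; ring_nf
  rw [this]
  field_simp

theorem cosh_eq_exp_mul (x : ℝ) : cosh x = exp x * ((1 + exp (-2 * x)) / 2) := by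
  rw [cosh_eq, mul_div_assoc', mul_add, ← exp_add]
  ring_nf

theorem tendsto_exp_neg_two_mul_atTop : Tendsto (fun x ↦ exp (-2 * x)) atTop (𝓝 0) :=
  tendsto_exp_atBot.comp (tendsto_id.const_mul_atTop_of_neg (by norm_num))

theorem tendsto_tanh_atTop : Tendsto tanh atTop (𝓝 1) := by
  have h := ((tendsto_const_nhds (x := (1 : ℝ))).sub tendsto_exp_neg_two_mul_atTop).div
    (tendsto_const_nhds.add tendsto_exp_neg_two_mul_atTop) (by norm_num : (1 : ℝ) + 0 ≠ 0)
  refine (h.congr fun x ↦ ?_).trans_eq (by norm_num)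
  rw [Pi.div_apply, tanh_eq_one_sub_exp_div]

theorem tendsto_log_cosh_sub_self_atTop :
    Tendsto (fun x ↦ log (cosh x) - x) atTop (𝓝 (-log 2)) := by
  have h := (((tendsto_const_nhds (x := (1 : ℝ))).add tendsto_exp_neg_two_mul_atTop).div_const
    2).log (by norm_num)
  refine (h.congr fun x ↦ ?_).trans_eq ?_
  · rw [cosh_eq_exp_mul, log_mul (exp_pos x).ne' (by positivity), log_exp]
    ring
  · simp [log_inv]

theorem tendsto_tanh_sub_one_mul_self_atTop :
    Tendsto (fun x ↦ (tanh x - 1) * x) atTop (𝓝 0) := by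
  have hxexp : Tendsto (fun x ↦ x * exp (-2 * x)) atTop (𝓝 0) := by
    have := ((tendsto_pow_mul_exp_neg_atTop_nhds_zero 1).comp
      (tendsto_id.const_mul_atTop two_pos)).const_mul (2⁻¹ : ℝ)
    simp only [pow_one, Function.comp_apply, id, mul_zero] at this
    exact this.congr fun x ↦ by ring_nf
  have h := (hxexp.const_mul (-2)).div (tendsto_const_nhds.add tendsto_exp_neg_two_mul_atTop)
    (by norm_num : (1 : ℝ) + 0 ≠ 0)
  refine (h.congr fun x ↦ ?_).trans_eq (by simp)
  rw [Pi.div_apply, tanh_eq_one_sub_exp_div]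
  field_simp
  ring

theorem tendsto_tanh_atBot : Tendsto tanh atBot (𝓝 (-1)) := by
  simpa [tanh_neg] using (tendsto_tanh_atTop.comp tendsto_neg_atBot_atTop).neg

noncomputable def tanhLogCoshPrimitive (x : ℝ) : ℝ := tanh x * (log (cosh x) + 1) - x

theorem hasDerivAt_tanhLogCoshPrimitive (x : ℝ) :
    HasDerivAt tanhLogCoshPrimitive ((1 - tanh x ^ 2) * log (cosh x)) x :=
  (((hasDerivAt_tanh x).mul ((hasDerivAt_log_cosh x).add_const 1)).sub
    (hasDerivAt_id' x)).congr_deriv (by ring)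

theorem tanhLogCoshPrimitive_neg (x : ℝ) :
    tanhLogCoshPrimitive (-x) = -tanhLogCoshPrimitive x := by
  simp only [tanhLogCoshPrimitive, tanh_neg, cosh_neg]
  ring

theorem tendsto_tanhLogCoshPrimitive_atTop :
    Tendsto tanhLogCoshPrimitive atTop (𝓝 (1 - log 2)) := by
  have h := ((tendsto_tanh_atTop.mul tendsto_log_cosh_sub_self_atTop).add
    tendsto_tanh_sub_one_mul_self_atTop).add tendsto_tanh_atTop
  refine (h.congr fun x ↦ ?_).trans_eq ?_
  · simp only [tanhLogCoshPrimitive]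
    ring
  · congr 1
    ring

theorem tendsto_tanhLogCoshPrimitive_atBot :
    Tendsto tanhLogCoshPrimitive atBot (𝓝 (-(1 - log 2))) := by
  simpa [tanhLogCoshPrimitive_neg] using
    (tendsto_tanhLogCoshPrimitive_atTop.comp tendsto_neg_atBot_atTop).neg

theorem integrable_one_sub_tanh_sq : Integrable fun x ↦ 1 - tanh x ^ 2 :=
  integrable_of_hasDerivAt_of_nonneg hasDerivAt_tanh
    (fun x ↦ sub_nonneg.2 (tanh_sq_lt_one x).le) tendsto_tanh_atBot tendsto_tanh_atTop

theorem integral_one_sub_tanh_sq : ∫ x, 1 - tanh x ^ 2 = 2 := by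
  rw [integral_of_hasDerivAt_of_tendsto hasDerivAt_tanh integrable_one_sub_tanh_sq
    tendsto_tanh_atBot tendsto_tanh_atTop]
  norm_num

theorem integrable_one_sub_tanh_sq_mul_log_cosh :
    Integrable fun x ↦ (1 - tanh x ^ 2) * log (cosh x) :=
  integrable_of_hasDerivAt_of_nonneg hasDerivAt_tanhLogCoshPrimitive
    (fun x ↦ mul_nonneg (sub_nonneg.2 (tanh_sq_lt_one x).le) (log_nonneg (one_le_cosh x)))
    tendsto_tanhLogCoshPrimitive_atBot tendsto_tanhLogCoshPrimitive_atTop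

theorem integral_one_sub_tanh_sq_mul_log_cosh :
    ∫ x, (1 - tanh x ^ 2) * log (cosh x) = 2 * (1 - log 2) := by
  rw [integral_of_hasDerivAt_of_tendsto hasDerivAt_tanhLogCoshPrimitive
    integrable_one_sub_tanh_sq_mul_log_cosh tendsto_tanhLogCoshPrimitive_atBot
    tendsto_tanhLogCoshPrimitive_atTop]
  ring

theorem integral_one_sub_tanh_sq_mul_log_cosh_add (c : ℝ) :
    ∫ x, (1 - tanh x ^ 2) * (log (cosh x) + c) = 2 * (1 - log 2 + c) := by
  simp_rw [mul_add]
  rw [integral_add integrable_one_sub_tanh_sq_mul_log_cosh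
    (integrable_one_sub_tanh_sq.mul_const c), integral_mul_const,
    integral_one_sub_tanh_sq_mul_log_cosh, integral_one_sub_tanh_sq]

end Real

/-- The two-particle contribution to the constant `C` of the scaling Ising model:
`∫_{-∞}^{∞} (tanh²(θ/2) - 1)(ln cosh(θ/2) + γ) dθ = 4 (ln 2 - γ - 1)`,
where `γ` is the Euler-Mascheroni constant. -/
theorem ising_C_two_particle :
    ∫ θ : ℝ, (Real.tanh (θ / 2) ^ 2 - 1) *
        (Real.log (Real.cosh (θ / 2)) + Real.eulerMascheroniConstant)
      = 4 * (Real.log 2 - Real.eulerMascheroniConstant - 1) := by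
  rw [Measure.integral_comp_div
    (fun u ↦ (tanh u ^ 2 - 1) * (log (cosh u) + eulerMascheroniConstant)) 2]
  simp_rw [← neg_sub (1 : ℝ), neg_mul, integral_neg, integral_one_sub_tanh_sq_mul_log_cosh_add]
  rw [abs_two, smul_eq_mul]
  ring
end

section
/- Decay of cumulants from clustering of moments: let n >= 2 and let I = {1, ..., n}. For each nonempty subset J of I not containing 1, let g_J be a complex constant (g_empty = 1); for each subset J containing 1, let g_J : R -> C be a function. Define the cumulants h by the partition relations: for each J containing 1, g_J(theta) = sum over set partitions pi of J of the product of h_B(theta) over blocks B of pi containing 1 times the product of h_B over the remaining blocks (constants), and similarly for J not containing 1 with constant cumulants h_B. Suppose for every J containing 1: lim as theta -> infinity of g_J(theta) = h_{{1}} * g_{J \ {1}}, where h_{{1}} = g_{{1}} is the limit constant of the one-element function. Then for every J containing 1 with |J| >= 2: lim as theta -> infinity of h_J(theta) = 0. -/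
open Filter

/-- The finite set of all set partitions of a finite set `J`: collections of
nonempty, pairwise disjoint subsets of `J` whose union is `J`. -/
def setPartitionsOf {α : Type*} [DecidableEq α] (J : Finset α) :
    Finset (Finset (Finset α)) :=
  J.powerset.powerset.filter fun P =>
    ∅ ∉ P ∧ P.sup id = J ∧ ∀ B ∈ P, ∀ C ∈ P, B ≠ C → Disjoint B C

/-!
Strong induction on `J ∋ 1`, sorting the partitions of `J` by the block containing `1`. Those
with block `{1}` contribute `h {1} · g (J \ {1})`, the one-block partition contributes `h J`, and
in every other partition `1` lies in a proper block with at least two elements, whose cumulant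
tends to `0` by induction while the remaining blocks are constant. Hence
`h J = g J - h {1} · g (J \ {1}) - o(1) → c · g (J \ {1}) - c · g (J \ {1}) = 0`.
-/

open Finset Topology

section SetPartitions

variable {α : Type*} [DecidableEq α] {J B C : Finset α} {P : Finset (Finset α)} {a x : α}

theorem mem_setPartitionsOf :
    P ∈ setPartitionsOf J ↔
      ∅ ∉ P ∧ P.sup id = J ∧ ∀ B ∈ P, ∀ C ∈ P, B ≠ C → Disjoint B C := by
  simp only [setPartitionsOf, mem_filter, mem_powerset, and_iff_right_iff_imp]
  exact fun ⟨_, hsup, _⟩ B hB => mem_powerset.2 (hsup ▸ le_sup (f := id) hB)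

theorem subset_of_mem_setPartitionsOf (hP : P ∈ setPartitionsOf J) (hB : B ∈ P) : B ⊆ J :=
  mem_powerset.1 (mem_powerset.1 (mem_filter.1 hP).1 hB)

theorem nonempty_of_mem_setPartitionsOf (hP : P ∈ setPartitionsOf J) (hB : B ∈ P) :
    B.Nonempty :=
  nonempty_iff_ne_empty.2 fun h => (mem_setPartitionsOf.1 hP).1 (h ▸ hB)

theorem exists_mem_of_mem_setPartitionsOf (hP : P ∈ setPartitionsOf J) (hx : x ∈ J) :
    ∃ B ∈ P, x ∈ B := by
  rw [← (mem_setPartitionsOf.1 hP).2.1] at hx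
  simpa using Finset.mem_sup.1 hx

theorem eq_of_mem_of_mem_setPartitionsOf (hP : P ∈ setPartitionsOf J) (hB : B ∈ P)
    (hC : C ∈ P) (hxB : x ∈ B) (hxC : x ∈ C) : B = C := by
  by_contra hBC
  exact disjoint_left.1 ((mem_setPartitionsOf.1 hP).2.2 B hB C hC hBC) hxB hxC

theorem eq_singleton_of_mem_setPartitionsOf (hP : P ∈ setPartitionsOf J) (hJ : J ∈ P) :
    P = {J} := by
  refine eq_singleton_iff_unique_mem.2 ⟨hJ, fun C hC => ?_⟩
  obtain ⟨x, hx⟩ := nonempty_of_mem_setPartitionsOf hP hC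
  exact eq_of_mem_of_mem_setPartitionsOf hP hC hJ hx (subset_of_mem_setPartitionsOf hP hC hx)

theorem singleton_self_mem_setPartitionsOf (hJ : J.Nonempty) : {J} ∈ setPartitionsOf J :=
  mem_setPartitionsOf.2 ⟨by simpa [eq_comm] using hJ.ne_empty, by simp, by simp⟩

theorem setPartitionsOf_singleton (a : α) : setPartitionsOf {a} = {{{a}}} := by
  ext P
  refine ⟨fun hP => ?_, fun hP => mem_singleton.1 hP ▸ singleton_self_mem_setPartitionsOf (by simp)⟩
  obtain ⟨B, hB, haB⟩ := exists_mem_of_mem_setPartitionsOf hP (mem_singleton_self a)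
  have hBa : B = {a} :=
    (Nonempty.subset_singleton_iff ⟨a, haB⟩).1 (subset_of_mem_setPartitionsOf hP hB)
  exact mem_singleton.2 (eq_singleton_of_mem_setPartitionsOf hP (hBa ▸ hB))

theorem erase_singleton_mem_setPartitionsOf (hP : P ∈ setPartitionsOf J) (ha : {a} ∈ P) :
    P.erase {a} ∈ setPartitionsOf (J.erase a) := by
  obtain ⟨hempty, -, hdisj⟩ := mem_setPartitionsOf.1 hP
  refine mem_setPartitionsOf.2 ⟨fun h => hempty (mem_of_mem_erase h), ?_,
    fun B hB C hC => hdisj B (mem_of_mem_erase hB) C (mem_of_mem_erase hC)⟩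
  ext x
  simp only [Finset.mem_sup, mem_erase, id]
  constructor
  · rintro ⟨B, ⟨hBa, hB⟩, hxB⟩
    refine ⟨fun hxa => hBa ?_, subset_of_mem_setPartitionsOf hP hB hxB⟩
    exact eq_of_mem_of_mem_setPartitionsOf hP hB ha hxB (hxa ▸ mem_singleton_self a)
  · rintro ⟨hxa, hx⟩
    obtain ⟨B, hB, hxB⟩ := exists_mem_of_mem_setPartitionsOf hP hx
    exact ⟨B, ⟨by rintro rfl; exact hxa (mem_singleton.1 hxB), hB⟩, hxB⟩

theorem insert_singleton_mem_setPartitionsOf (ha : a ∈ J)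
    (hP : P ∈ setPartitionsOf (J.erase a)) : insert {a} P ∈ setPartitionsOf J := by
  obtain ⟨hempty, hsup, hdisj⟩ := mem_setPartitionsOf.1 hP
  have hdisj_a : ∀ B ∈ P, Disjoint {a} B := fun B hB =>
    disjoint_singleton_left.2 fun haB => by simpa using subset_of_mem_setPartitionsOf hP hB haB
  refine mem_setPartitionsOf.2 ⟨?_, ?_, ?_⟩
  · simpa [eq_comm] using hempty
  · rw [sup_insert, hsup, id, sup_eq_union, ← insert_eq, insert_erase ha]
  · simp only [mem_insert]
    rintro B (rfl | hB) C (rfl | hC) hBC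
    · exact absurd rfl hBC
    · exact hdisj_a C hC
    · exact (hdisj_a B hB).symm
    · exact hdisj B hB C hC hBC

theorem sum_filter_singleton_mem_setPartitionsOf {R : Type*} [CommSemiring R] (ha : a ∈ J)
    (f : Finset α → R) :
    ∑ P ∈ (setPartitionsOf J).filter ({a} ∈ ·), ∏ B ∈ P, f B
      = f {a} * ∑ P ∈ setPartitionsOf (J.erase a), ∏ B ∈ P, f B := by
  have hnot : ∀ P ∈ setPartitionsOf (J.erase a), {a} ∉ P := fun P hP h => by
    simpa using subset_of_mem_setPartitionsOf hP h (mem_singleton_self a)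
  rw [mul_sum]
  refine sum_nbij' (fun P => P.erase {a}) (insert {a}) (fun P hP => ?_) (fun P hP => ?_)
    (fun P hP => insert_erase (mem_filter.1 hP).2) (fun P hP => erase_insert (hnot P hP))
    (fun P hP => (mul_prod_erase P f (mem_filter.1 hP).2).symm)
  · exact erase_singleton_mem_setPartitionsOf (mem_filter.1 hP).1 (mem_filter.1 hP).2
  · exact mem_filter.2 ⟨insert_singleton_mem_setPartitionsOf ha hP, mem_insert_self _ _⟩

theorem sum_setPartitionsOf_eq {R : Type*} [CommSemiring R] (ha : a ∈ J) (hJ : J ≠ {a})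
    (f : Finset α → R) :
    ∑ P ∈ setPartitionsOf J, ∏ B ∈ P, f B
      = f {a} * ∑ P ∈ setPartitionsOf (J.erase a), ∏ B ∈ P, f B + f J
        + ∑ P ∈ ((setPartitionsOf J).filter ({a} ∉ ·)).erase {J}, ∏ B ∈ P, f B := by
  have htop : {J} ∈ (setPartitionsOf J).filter ({a} ∉ ·) :=
    mem_filter.2 ⟨singleton_self_mem_setPartitionsOf ⟨a, ha⟩, by simpa [eq_comm] using hJ⟩
  rw [← sum_filter_add_sum_filter_not _ ({a} ∈ ·), sum_filter_singleton_mem_setPartitionsOf ha,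
    ← add_sum_erase _ _ htop, prod_singleton, add_assoc]

theorem exists_mem_ssubset_two_le_card_of_mem_setPartitionsOf (hP : P ∈ setPartitionsOf J)
    (ha : a ∈ J) (hPa : {a} ∉ P) (hPJ : P ≠ {J}) : ∃ B ∈ P, a ∈ B ∧ B ⊂ J ∧ 2 ≤ #B := by
  obtain ⟨B, hB, haB⟩ := exists_mem_of_mem_setPartitionsOf hP ha
  have hBJ : B ⊂ J := ssubset_of_subset_of_ne (subset_of_mem_setPartitionsOf hP hB)
    fun h => hPJ (eq_singleton_of_mem_setPartitionsOf hP (h ▸ hB))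
  have haB' : {a} ⊂ B :=
    ssubset_of_subset_of_ne (singleton_subset_iff.2 haB) fun h => hPa (h ▸ hB)
  exact ⟨B, hB, haB, hBJ, (card_singleton a).symm.trans_lt (card_lt_card haB')⟩

end SetPartitions

section Limits

variable {β R : Type*} [CommSemiring R] [TopologicalSpace R] [IsTopologicalSemiring R]
  {l : Filter β}

theorem tendsto_prod_zero_of_mem {ι : Type*} [DecidableEq ι] {s : Finset ι} {F : ι → β → R}
    {c : ι → R} {i : ι} (hi : i ∈ s) (hzero : Tendsto (F i) l (𝓝 0))
    (hF : ∀ j ∈ s.erase i, Tendsto (F j) l (𝓝 (c j))) :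
    Tendsto (fun θ => ∏ j ∈ s, F j θ) l (𝓝 0) := by
  have := hzero.mul (tendsto_finsetProd _ hF)
  rw [zero_mul] at this
  exact this.congr fun θ => mul_prod_erase s (F · θ) hi

theorem tendsto_sum_prod_setPartitionsOf_zero {α : Type*} [DecidableEq α] {J : Finset α} {a : α}
    (h : Finset α → β → R) (c : Finset α → R) (ha : a ∈ J)
    (hzero : ∀ B ⊂ J, a ∈ B → 2 ≤ #B → Tendsto (h B) l (𝓝 0))
    (hconv : ∀ B ⊆ J, a ∉ B → Tendsto (h B) l (𝓝 (c B))) :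
    Tendsto (fun θ => ∑ P ∈ ((setPartitionsOf J).filter ({a} ∉ ·)).erase {J}, ∏ B ∈ P, h B θ)
      l (𝓝 0) := by
  suffices ∀ P ∈ ((setPartitionsOf J).filter ({a} ∉ ·)).erase {J},
      Tendsto (fun θ => ∏ B ∈ P, h B θ) l (𝓝 0) by
    simpa using tendsto_finsetSum _ this
  intro P hP
  obtain ⟨hPJ, hP⟩ := mem_erase.1 hP
  obtain ⟨hP, hPa⟩ := mem_filter.1 hP
  obtain ⟨B, hB, haB, hBJ, hBcard⟩ :=
    exists_mem_ssubset_two_le_card_of_mem_setPartitionsOf hP ha hPa hPJ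
  refine tendsto_prod_zero_of_mem (c := c) hB (hzero B hBJ haB hBcard) fun C hC => ?_
  obtain ⟨hCB, hC⟩ := mem_erase.1 hC
  exact hconv C (subset_of_mem_setPartitionsOf hP hC)
    fun haC => hCB (eq_of_mem_of_mem_setPartitionsOf hP hC hB haC haB)

end Limits

theorem cumulant_decay_of_clustering_general
    (I : Finset ℕ)
    (g h : Finset ℕ → ℝ → ℂ)
    (hconstg : ∀ J ⊆ I, 1 ∉ J → ∀ θ θ' : ℝ, g J θ = g J θ')
    (hconsth : ∀ J ⊆ I, 1 ∉ J → ∀ θ θ' : ℝ, h J θ = h J θ')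
    (hrel : ∀ J ⊆ I, ∀ θ : ℝ, g J θ = ∑ P ∈ setPartitionsOf J, ∏ B ∈ P, h B θ)
    (c : ℂ) (hc : Tendsto (g {1}) atTop (nhds c))
    (hcluster : ∀ J ⊆ I, 1 ∈ J → 2 ≤ J.card →
      Tendsto (g J) atTop (nhds (c * g (J \ {1}) 0))) :
    ∀ J ⊆ I, 1 ∈ J → 2 ≤ J.card → Tendsto (h J) atTop (nhds 0) := by
  intro J
  induction J using Finset.strongInduction with | H J ih => ?_
  intro hJI h1J hcard
  have hJ1 : J ≠ {1} := by rintro rfl; simp at hcard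
  have hJ1I : J.erase 1 ⊆ I := (erase_subset 1 J).trans hJI
  have hone : Tendsto (h {1}) atTop (𝓝 c) := hc.congr fun θ => by
    rw [hrel {1} (singleton_subset_iff.2 (hJI h1J)), setPartitionsOf_singleton, sum_singleton,
      prod_singleton]
  have hrest := tendsto_sum_prod_setPartitionsOf_zero h (h · 0) h1J
    (fun B hBJ h1B hB => ih B hBJ (hBJ.subset.trans hJI) h1B hB)
    fun B hBJ h1B => tendsto_const_nhds.congr fun θ => hconsth B (hBJ.trans hJI) h1B 0 θ
  have hdecomp : ∀ θ, h J θ = g J θ - h {1} θ * g (J \ {1}) 0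
      - ∑ P ∈ ((setPartitionsOf J).filter ({1} ∉ ·)).erase {J}, ∏ B ∈ P, h B θ := by
    intro θ
    rw [hrel J hJI, sum_setPartitionsOf_eq h1J hJ1, ← hrel _ hJ1I, sdiff_singleton_eq_erase,
      hconstg _ hJ1I (notMem_erase 1 J) θ 0]
    ring
  have := ((hcluster J hJI h1J hcard).sub (hone.mul_const (g (J \ {1}) 0))).sub hrest
  rw [sub_self, sub_zero] at this
  exact this.congr fun θ => (hdecomp θ).symm

/-- Decay of cumulants from clustering of moments: on `I = {1,…,n}` let the
moments `g J` be given by the partition relations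
`g J (θ) = ∑_{partitions P of J} ∏_{B ∈ P} h B (θ)`, where `g J` and `h J` are
constant in `θ` whenever `1 ∉ J`.  If `g {1} (θ) → c` and, for every `J ∋ 1`
with `|J| ≥ 2`, `g J (θ) → c · g (J \ {1})` as `θ → ∞` (cluster property), then
every cumulant `h J` with `1 ∈ J` and `|J| ≥ 2` tends to `0` as `θ → ∞`. -/
theorem cumulant_decay_of_clustering (n : ℕ) (hn : 2 ≤ n)
    (I : Finset ℕ) (hI : I = Finset.Icc 1 n)
    (g h : Finset ℕ → ℝ → ℂ)
    (hconstg : ∀ J ⊆ I, 1 ∉ J → ∀ θ θ' : ℝ, g J θ = g J θ')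
    (hconsth : ∀ J ⊆ I, 1 ∉ J → ∀ θ θ' : ℝ, h J θ = h J θ')
    (hrel : ∀ J ⊆ I, ∀ θ : ℝ, g J θ = ∑ P ∈ setPartitionsOf J, ∏ B ∈ P, h B θ)
    (c : ℂ) (hc : Tendsto (g {1}) atTop (nhds c))
    (hcluster : ∀ J ⊆ I, 1 ∈ J → 2 ≤ J.card →
      Tendsto (g J) atTop (nhds (c * g (J \ {1}) 0))) :
    ∀ J ⊆ I, 1 ∈ J → 2 ≤ J.card → Tendsto (h J) atTop (nhds 0) :=
  cumulant_decay_of_clustering_general I g h hconstg hconsth hrel c hc hcluster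
end
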